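/- Assume d1 < x_T < d2, let x ∈ (d1,d2) and s ∈ [0,T) with u(x,s) > 0, and suppose the minimum of (d,t) ↦ u(x,s;d,t) over {d1,d2}×(s,T) is attained at two distinct points. Then the function y ↦ u(y,s) is not differentiable at y = x. -/

import Mathlib

lemma aux_sinh_pos (a r : ℝ) (ha : a ≠ 0) (hr : 0 < r) : 0 < a * Real.sinh (a * r) := by
  rcases ha.lt_or_gt with h | h
  · have h1 : a * r < 0 := mul_neg_of_neg_of_pos h hr
    have h2 : Real.sinh (a * r) < 0 := by
      have := Real.sinh_lt_sinh.2 h1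
      simpa using this
    exact mul_pos_of_neg_of_neg h h2
  · exact mul_pos h (Real.sinh_pos_iff.2 (mul_pos h hr))

lemma aux_pq_pos (a : ℝ) (ha : a ≠ 0) {u v : ℝ} (hu : 0 < u) (hv : 0 < v) :
    0 < Real.sinh (a * u) * Real.sinh (a * v) := by
  have h1 := aux_sinh_pos a u ha hu
  have h2 := aux_sinh_pos a v ha hv
  have ha2 : 0 < a ^ 2 := by positivity
  nlinarith [mul_pos h1 h2]

lemma sinh_mul_sinh' (u v : ℝ) :
    Real.sinh u * Real.sinh v = (Real.cosh (u + v) - Real.cosh (u - v)) / 2 := by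
  rw [Real.cosh_add, Real.cosh_sub]; ring

/-- The deterministic trajectory `x⁰_{x,s}`. -/
noncomputable def traj (a0 a1 T xT x s t : ℝ) : ℝ :=
  (x + a0 / a1) * Real.sinh (a1 * (T - t)) / Real.sinh (a1 * (T - s)) +
    (xT + a0 / a1) * Real.sinh (a1 * (t - s)) / Real.sinh (a1 * (T - s)) - a0 / a1

/-- The two-point cost `u(x,s;d,t)`. -/
noncomputable def cost (a0 a1 T xT x s d t : ℝ) : ℝ :=
  a1 * Real.sinh (a1 * (T - s)) * (d - traj a0 a1 T xT x s t) ^ 2 /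
    (2 * Real.sinh (a1 * (T - t)) * Real.sinh (a1 * (t - s)))

/-- The exit cost `u(x,s) = inf { u(x,s;d,t) : d ∈ {d1,d2}, t ∈ (s,T) }`. -/
noncomputable def uval (a0 a1 T xT d1 d2 x s : ℝ) : ℝ :=
  sInf {r : ℝ | ∃ d, (d = d1 ∨ d = d2) ∧ ∃ t ∈ Set.Ioo s T, r = cost a0 a1 T xT x s d t}

theorem stmt_17 (a0 a1 T xT d1 d2 : ℝ) (ha1 : a1 ≠ 0) (hT : 0 < T)
    (h1 : d1 < xT) (h2 : xT < d2)
    (x s : ℝ) (hx : x ∈ Set.Ioo d1 d2) (hs0 : 0 ≤ s) (hsT : s < T)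
    (hpos : 0 < uval a0 a1 T xT d1 d2 x s)
    (da ta db tb : ℝ)
    (hda : da = d1 ∨ da = d2) (hta : ta ∈ Set.Ioo s T)
    (hdb : db = d1 ∨ db = d2) (htb : tb ∈ Set.Ioo s T)
    (hne : (da, ta) ≠ (db, tb))
    (hmina : ∀ d, (d = d1 ∨ d = d2) → ∀ t ∈ Set.Ioo s T,
      cost a0 a1 T xT x s da ta ≤ cost a0 a1 T xT x s d t)
    (hminb : ∀ d, (d = d1 ∨ d = d2) → ∀ t ∈ Set.Ioo s T,
      cost a0 a1 T xT x s db tb ≤ cost a0 a1 T xT x s d t) :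
    ¬ DifferentiableAt ℝ (fun y => uval a0 a1 T xT d1 d2 y s) x := by
  intro hdiff
  have hTs : 0 < T - s := sub_pos.2 hsT
  have hP : 0 < a1 * Real.sinh (a1 * (T - s)) := aux_sinh_pos a1 (T - s) ha1 hTs
  have hPne : Real.sinh (a1 * (T - s)) ≠ 0 := by
    intro h; rw [h, mul_zero] at hP; exact lt_irrefl 0 hP
  -- positivity of denominators
  have hpq : ∀ t ∈ Set.Ioo s T, 0 < Real.sinh (a1 * (T - t)) * Real.sinh (a1 * (t - s)) := by
    intro t ht
    exact aux_pq_pos a1 ha1 (sub_pos.2 ht.2) (sub_pos.2 ht.1)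
  have hpane : Real.sinh (a1 * (T - ta)) ≠ 0 :=
    left_ne_zero_of_mul (ne_of_gt (hpq ta hta))
  have hqane : Real.sinh (a1 * (ta - s)) ≠ 0 :=
    right_ne_zero_of_mul (ne_of_gt (hpq ta hta))
  have hpbne : Real.sinh (a1 * (T - tb)) ≠ 0 :=
    left_ne_zero_of_mul (ne_of_gt (hpq tb htb))
  have hqbne : Real.sinh (a1 * (tb - s)) ≠ 0 :=
    right_ne_zero_of_mul (ne_of_gt (hpq tb htb))
  -- costs are nonnegative
  have hcost_nonneg : ∀ y d, ∀ t ∈ Set.Ioo s T, 0 ≤ cost a0 a1 T xT y s d t := by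
    intro y d t ht
    have h := hpq t ht
    unfold cost
    apply div_nonneg
    · nlinarith [mul_nonneg hP.le (sq_nonneg (d - traj a0 a1 T xT y s t))]
    · nlinarith
  -- sInf facts
  have hbdd : ∀ y, BddBelow {r : ℝ | ∃ d, (d = d1 ∨ d = d2) ∧
      ∃ t ∈ Set.Ioo s T, r = cost a0 a1 T xT y s d t} := by
    intro y
    refine ⟨0, ?_⟩
    rintro r ⟨d, hd, t, ht, rfl⟩
    exact hcost_nonneg y d t ht
  have hmem : ∀ y d, (d = d1 ∨ d = d2) → ∀ t ∈ Set.Ioo s T,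
      cost a0 a1 T xT y s d t ∈ {r : ℝ | ∃ d, (d = d1 ∨ d = d2) ∧
        ∃ t ∈ Set.Ioo s T, r = cost a0 a1 T xT y s d t} := by
    intro y d hd t ht
    exact ⟨d, hd, t, ht, rfl⟩
  have hlea : ∀ y, uval a0 a1 T xT d1 d2 y s ≤ cost a0 a1 T xT y s da ta := by
    intro y
    exact csInf_le (hbdd y) (hmem y da hda ta hta)
  have hleb : ∀ y, uval a0 a1 T xT d1 d2 y s ≤ cost a0 a1 T xT y s db tb := by
    intro y
    exact csInf_le (hbdd y) (hmem y db hdb tb htb)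
  have hmid : (s + T) / 2 ∈ Set.Ioo s T := ⟨by linarith, by linarith⟩
  have hvala : uval a0 a1 T xT d1 d2 x s = cost a0 a1 T xT x s da ta := by
    refine le_antisymm (hlea x) (le_csInf ⟨_, hmem x d1 (Or.inl rfl) _ hmid⟩ ?_)
    rintro r ⟨d, hd, t, ht, rfl⟩
    exact hmina d hd t ht
  have hvalb : uval a0 a1 T xT d1 d2 x s = cost a0 a1 T xT x s db tb := by
    refine le_antisymm (hleb x) (le_csInf ⟨_, hmem x d1 (Or.inl rfl) _ hmid⟩ ?_)
    rintro r ⟨d, hd, t, ht, rfl⟩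
    exact hminb d hd t ht
  -- derivative of cost in y
  have hder : ∀ d t, Real.sinh (a1 * (T - t)) ≠ 0 → Real.sinh (a1 * (t - s)) ≠ 0 →
      HasDerivAt (fun y => cost a0 a1 T xT y s d t)
        (-(a1 * (d - traj a0 a1 T xT x s t) / Real.sinh (a1 * (t - s)))) x := by
    intro d t hp hq
    unfold cost traj
    have h := (((((((hasDerivAt_id x).add_const (a0 / a1)).mul_const
        (Real.sinh (a1 * (T - t)))).div_const (Real.sinh (a1 * (T - s)))).add_const
        ((xT + a0 / a1) * Real.sinh (a1 * (t - s)) / Real.sinh (a1 * (T - s)))).sub_const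
        (a0 / a1)).const_sub d).pow 2 |>.const_mul (a1 * Real.sinh (a1 * (T - s)))
        |>.div_const (2 * Real.sinh (a1 * (T - t)) * Real.sinh (a1 * (t - s)))
    refine h.congr_deriv ?_
    push_cast
    simp only [id_eq]
    field_simp
  have hdera := hder da ta hpane hqane
  have hderb := hder db tb hpbne hqbne
  -- touching argument: deriv u x = deriv cost x for both minimizers
  have htouch : ∀ (d t : ℝ), (∀ y, uval a0 a1 T xT d1 d2 y s ≤ cost a0 a1 T xT y s d t) →
      uval a0 a1 T xT d1 d2 x s = cost a0 a1 T xT x s d t →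
      HasDerivAt (fun y => cost a0 a1 T xT y s d t) (-(a1 * (d - traj a0 a1 T xT x s t) /
        Real.sinh (a1 * (t - s)))) x →
      deriv (fun y => uval a0 a1 T xT d1 d2 y s) x
        = -(a1 * (d - traj a0 a1 T xT x s t) / Real.sinh (a1 * (t - s))) := by
    intro d t hle hval hD
    have hloc : IsLocalMin (fun y => cost a0 a1 T xT y s d t -
        uval a0 a1 T xT d1 d2 y s) x := by
      apply Filter.Eventually.of_forall
      intro y
      have := hle y
      simp only
      linarith [hval]
    have h0 := hloc.deriv_eq_zero
    rw [deriv_fun_sub hD.differentiableAt hdiff, hD.deriv] at h0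
    linarith
  have hda' := htouch da ta hlea hvala hdera
  have hdb' := htouch db tb hleb hvalb hderb
  -- equality of derivatives
  have hdeq : -(a1 * (da - traj a0 a1 T xT x s ta) / Real.sinh (a1 * (ta - s)))
      = -(a1 * (db - traj a0 a1 T xT x s tb) / Real.sinh (a1 * (tb - s))) := by
    rw [← hda', ← hdb']
  -- algebra
  have hNa : da - traj a0 a1 T xT x s ta ≠ 0 := by
    intro h
    rw [hvala] at hpos
    simp only [cost, h] at hpos
    norm_num at hpos
  have hq1 : (da - traj a0 a1 T xT x s ta) * Real.sinh (a1 * (tb - s))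
      = (db - traj a0 a1 T xT x s tb) * Real.sinh (a1 * (ta - s)) := by
    field_simp at hdeq
    apply mul_left_cancel₀ ha1
    linear_combination -a1 * hdeq
  have hveq : a1 * Real.sinh (a1 * (T - s)) * (da - traj a0 a1 T xT x s ta) ^ 2 /
        (2 * Real.sinh (a1 * (T - ta)) * Real.sinh (a1 * (ta - s)))
      = a1 * Real.sinh (a1 * (T - s)) * (db - traj a0 a1 T xT x s tb) ^ 2 /
        (2 * Real.sinh (a1 * (T - tb)) * Real.sinh (a1 * (tb - s))) := hvala.symm.trans hvalb
  have hv1 : (da - traj a0 a1 T xT x s ta) ^ 2 *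
        (Real.sinh (a1 * (T - tb)) * Real.sinh (a1 * (tb - s)))
      = (db - traj a0 a1 T xT x s tb) ^ 2 *
        (Real.sinh (a1 * (T - ta)) * Real.sinh (a1 * (ta - s))) := by
    rw [div_eq_div_iff (mul_ne_zero (mul_ne_zero two_ne_zero hpane) hqane)
      (mul_ne_zero (mul_ne_zero two_ne_zero hpbne) hqbne)] at hveq
    apply mul_left_cancel₀ (mul_ne_zero (mul_ne_zero ha1 hPne) (two_ne_zero (α := ℝ)))
    linear_combination hveq
  have h3 : (da - traj a0 a1 T xT x s ta) ^ 2 * Real.sinh (a1 * (tb - s)) *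
      Real.sinh (a1 * (ta - s)) *
      (Real.sinh (a1 * (T - tb)) * Real.sinh (a1 * (ta - s)) -
       Real.sinh (a1 * (T - ta)) * Real.sinh (a1 * (tb - s))) = 0 := by
    linear_combination Real.sinh (a1 * (ta - s)) ^ 2 * hv1 -
      Real.sinh (a1 * (T - ta)) * Real.sinh (a1 * (ta - s)) *
      ((db - traj a0 a1 T xT x s tb) * Real.sinh (a1 * (ta - s)) +
       (da - traj a0 a1 T xT x s ta) * Real.sinh (a1 * (tb - s))) * hq1
  have h4 : Real.sinh (a1 * (T - tb)) * Real.sinh (a1 * (ta - s)) -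
      Real.sinh (a1 * (T - ta)) * Real.sinh (a1 * (tb - s)) = 0 := by
    have hne' : (da - traj a0 a1 T xT x s ta) ^ 2 * Real.sinh (a1 * (tb - s)) *
        Real.sinh (a1 * (ta - s)) ≠ 0 :=
      mul_ne_zero (mul_ne_zero (pow_ne_zero 2 hNa) hqbne) hqane
    exact (mul_eq_zero.mp h3).resolve_left hne'
  have hkey : Real.sinh (a1 * (T - tb)) * Real.sinh (a1 * (ta - s)) -
      Real.sinh (a1 * (T - ta)) * Real.sinh (a1 * (tb - s))
      = (Real.cosh (a1 * ((T - s) + (ta - tb))) -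
         Real.cosh (a1 * ((T - s) - (ta - tb)))) / 2 := by
    have e1 := sinh_mul_sinh' (a1 * (ta - s)) (a1 * (T - tb))
    have e2 := sinh_mul_sinh' (a1 * (T - ta)) (a1 * (tb - s))
    rw [show a1 * (ta - s) + a1 * (T - tb) = a1 * ((T - s) + (ta - tb)) by ring,
        show a1 * (ta - s) - a1 * (T - tb) = a1 * (ta + tb - s - T) by ring] at e1
    rw [show a1 * (T - ta) + a1 * (tb - s) = a1 * ((T - s) - (ta - tb)) by ring,
        show a1 * (T - ta) - a1 * (tb - s) = -(a1 * (ta + tb - s - T)) by ring,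
        Real.cosh_neg] at e2
    linear_combination e1 - e2
  have hcc : Real.cosh (a1 * ((T - s) + (ta - tb)))
      = Real.cosh (a1 * ((T - s) - (ta - tb))) := by
    rw [h4] at hkey
    linarith
  have habs : |a1 * ((T - s) + (ta - tb))| = |a1 * ((T - s) - (ta - tb))| := by
    by_contra habs
    rcases Ne.lt_or_gt habs with h' | h'
    · have := Real.cosh_lt_cosh.2 h'
      rw [hcc] at this
      exact lt_irrefl _ this
    · have := Real.cosh_lt_cosh.2 h'
      rw [hcc] at this
      exact lt_irrefl _ this
  have htab : ta = tb := by
    have hsq : (a1 * ((T - s) + (ta - tb))) ^ 2 = (a1 * ((T - s) - (ta - tb))) ^ 2 := by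
      rw [← sq_abs, ← sq_abs (a1 * ((T - s) - (ta - tb))), habs]
    have h6 : (ta - tb) * (a1 ^ 2 * (4 * (T - s))) = 0 := by linear_combination hsq
    have h7 : a1 ^ 2 * (4 * (T - s)) ≠ 0 := by positivity
    have := (mul_eq_zero.mp h6).resolve_right h7
    linarith
  subst htab
  have hdd : da = db := by
    have := mul_right_cancel₀ hqane hq1
    linarith
  exact hne (by rw [hdd])
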